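/- arXiv:1007.0331 — 3 statements merged into one kernel-verified Lean document; each statement's English description precedes it below -/
import Mathlib

section
/- Let H be a Hilbert space, S an orthogonal (self-adjoint) projection onto a closed subspace M, and C a bounded operator with range in M such that C restricted to M is the identity (i.e., SC = C and CS = S). Then S(I + A) = C, where A = C - C*. -/
open ContinuousLinearMap

/-- Abstract Kerzman–Stein formula: if `S` is the orthogonal (self-adjoint)
projection onto a closed subspace `M` and `C` is a bounded operator with range
in `M` whose restriction to `M` is the identity (`S ∘ C = C`, `C ∘ S = S`),
then `S (I + A) = C` where `A = C - C*`. -/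
theorem kerzman_stein {E : Type*} [NormedAddCommGroup E] [InnerProductSpace ℂ E]
    [CompleteSpace E]
    (M : Submodule ℂ E) (hM : IsClosed (M : Set E))
    (S C : E →L[ℂ] E)
    (hSrange : ∀ x, S x ∈ M) (hSfix : ∀ x ∈ M, S x = x)
    (hSadj : adjoint S = S)
    (hCrange : ∀ x, C x ∈ M)
    (hSC : S ∘L C = C) (hCS : C ∘L S = S) :
    S ∘L (1 + (C - adjoint C)) = C := by
  have h1 : S ∘L adjoint C = S := by
    have := congrArg adjoint hCS
    rwa [adjoint_comp, hSadj] at this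
  have : S ∘L (1 + (C - adjoint C)) = S ∘L 1 + (S ∘L C - S ∘L adjoint C) := by
    rw [comp_add, comp_sub]
  rw [this, h1, hSC, show S ∘L 1 = S from mul_one S]
  abel
end

section
/- In the setting of the abstract Kerzman–Stein formula, if additionally I + A is invertible (A = C - C*), then the orthogonal projection S is given explicitly by S = C(I + A)^{-1}. -/
open ContinuousLinearMap

/-- Abstract Kerzman–Stein formula: if `S` is the orthogonal (self-adjoint)
projection onto a closed subspace `M` and `C` is a bounded operator with range
in `M` whose restriction to `M` is the identity (`S ∘ C = C`, `C ∘ S = S`),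
and additionally `I + A` is invertible (`A = C - C*`), then the orthogonal
projection is given explicitly by `S = C (I + A)⁻¹`. -/
theorem szego_formula {E : Type*} [NormedAddCommGroup E] [InnerProductSpace ℂ E]
    [CompleteSpace E]
    (M : Submodule ℂ E) (hM : IsClosed (M : Set E))
    (S C : E →L[ℂ] E)
    (hSrange : ∀ x, S x ∈ M) (hSfix : ∀ x ∈ M, S x = x)
    (hSadj : adjoint S = S)
    (hCrange : ∀ x, C x ∈ M)
    (hSC : S ∘L C = C) (hCS : C ∘L S = S)
    (hinv : IsUnit (1 + (C - adjoint C))) :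
    S = C ∘L Ring.inverse (1 + (C - adjoint C)) := by
  have h1 : S ∘L adjoint C = S := by
    have h := congrArg adjoint hCS
    rwa [adjoint_comp, hSadj] at h
  have h2 : S * (1 + (C - adjoint C)) = C := by
    have e1 : S * C = C := hSC
    have e2 : S * adjoint C = S := h1
    rw [mul_add, mul_sub, mul_one, e1, e2]
    abel
  calc S = S * ((1 + (C - adjoint C)) * Ring.inverse (1 + (C - adjoint C))) := by
          rw [Ring.mul_inverse_cancel _ hinv, mul_one]
    _ = (S * (1 + (C - adjoint C))) * Ring.inverse (1 + (C - adjoint C)) := by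
          rw [mul_assoc]
    _ = C ∘L Ring.inverse (1 + (C - adjoint C)) := by rw [h2]; rfl
end

section
/- Let H, N be bounded operators on a Hilbert space with H^2 = I, H* = NHN, N^2 = -I, and let M = {x : Hx = x} be the fixed subspace of H. If HNx = -Nx for all x ∈ M, then H is unitary. -/
/-!
Write `x = g + N h` with `H g = g`, `H h = h`. Since `H (N h) = -N h` and `N² = -1`, both
`H x` and `N H N x` equal `g - N h`. Hence `H* = N H N = H`, and a self-adjoint involution is
unitary.
-/

open ContinuousLinearMap

section FixedDecomposition

variable {E F : Type*} [AddCommGroup E] [FunLike F E E] [AddMonoidHomClass F E E] {H N : F}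

theorem apply_add_apply_eq_sub (hfix : ∀ x, H x = x → H (N x) = -N x) {g h : E}
    (hg : H g = g) (hh : H h = h) : H (g + N h) = g - N h := by
  rw [map_add, hg, hfix h hh, sub_eq_add_neg]

theorem conj_apply_add_apply_eq_sub (hNN : ∀ y, N (N y) = -y)
    (hfix : ∀ x, H x = x → H (N x) = -N x) {g h : E} (hg : H g = g) (hh : H h = h) :
    N (H (N (g + N h))) = g - N h := by
  have hNx : N (g + N h) = N g - h := by rw [map_add, hNN, sub_eq_add_neg]
  rw [hNx, map_sub, hfix g hg, hh, map_sub, map_neg, hNN, neg_neg]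

theorem conj_apply_eq_apply (hNN : ∀ y, N (N y) = -y)
    (hfix : ∀ x, H x = x → H (N x) = -N x)
    (hdecomp : ∀ x : E, ∃ g h : E, H g = g ∧ H h = h ∧ x = g + N h) (x : E) :
    N (H (N x)) = H x := by
  obtain ⟨g, h, hg, hh, rfl⟩ := hdecomp x
  rw [conj_apply_add_apply_eq_sub hNN hfix hg hh, apply_add_apply_eq_sub hfix hg hh]

end FixedDecomposition

/-- If `H² = I`, `H* = N H N`, `N² = -I`, the whole space decomposes as
`M ⊕ N M` where `M = {x : H x = x}`, and `H N x = -N x` for all `x ∈ M`,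
then `H` is unitary. -/
theorem fixed_condition_implies_unitary {E : Type*} [NormedAddCommGroup E]
    [InnerProductSpace ℂ E] [CompleteSpace E]
    (H N : E →L[ℂ] E)
    (hH2 : H ∘L H = 1)
    (hHadj : adjoint H = N ∘L H ∘L N)
    (hN2 : N ∘L N = -1)
    (hdecomp : ∀ x : E, ∃ g h : E, H g = g ∧ H h = h ∧ x = g + N h)
    (hfix : ∀ x : E, H x = x → H (N x) = -(N x)) :
    adjoint H ∘L H = 1 ∧ H ∘L adjoint H = 1 := by
  have hNN : ∀ y, N (N y) = -y := fun y => by simpa using congr($hN2 y)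
  have hselfAdjoint : adjoint H = H := by
    ext x
    rw [hHadj]
    exact conj_apply_eq_apply hNN hfix hdecomp x
  rw [hselfAdjoint]
  exact ⟨hH2, hH2⟩
end
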